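/- For any vectors a, b, c ∈ ℝⁿ, the cone {X ∈ S^n_+ : aᵀXb ≥ 0, bᵀXc ≥ 0, aᵀXc ≥ 0} is rank-one generated. -/

import Mathlib

open Matrix Set

noncomputable section

/-- The set of rank-one (outer product) matrices `x xᵀ`. -/
def RankOneSet (n : ℕ) : Set (Matrix (Fin n) (Fin n) ℝ) :=
  {X | ∃ x : Fin n → ℝ, X = vecMulVec x x}

/-- A set of PSD matrices is rank-one generated if it equals the convex hull of its
rank-one members. -/
def IsROG {n : ℕ} (S : Set (Matrix (Fin n) (Fin n) ℝ)) : Prop :=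
  S = convexHull ℝ (S ∩ RankOneSet n)

/-- `ℝ₊X` is an extreme ray of `S`: `X ∈ S`, `X ≠ 0`, and whenever `X = (Y+Z)/2` with
`Y, Z ∈ S`, both `Y` and `Z` lie on the ray `ℝ₊X`. -/
def IsExtremeRay' {n : ℕ} (S : Set (Matrix (Fin n) (Fin n) ℝ))
    (X : Matrix (Fin n) (Fin n) ℝ) : Prop :=
  X ∈ S ∧ X ≠ 0 ∧ ∀ Y ∈ S, ∀ Z ∈ S, X = (1/2 : ℝ) • (Y + Z) →
    (∃ α : ℝ, 0 ≤ α ∧ Y = α • X) ∧ (∃ β : ℝ, 0 ≤ β ∧ Z = β • X)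

/-- `S(𝓜) = {X ⪰ 0 : ⟨N, X⟩ ≥ 0 ∀ N ∈ 𝓜}` with the trace inner product. -/
def SCone {n : ℕ} (𝓜 : Set (Matrix (Fin n) (Fin n) ℝ)) : Set (Matrix (Fin n) (Fin n) ℝ) :=
  {X | X.PosSemidef ∧ ∀ N ∈ 𝓜, 0 ≤ (N * X).trace}

/-- `T(𝓜) = {X ⪰ 0 : ⟨N, X⟩ = 0 ∀ N ∈ 𝓜}` with the trace inner product. -/
def TCone {n : ℕ} (𝓜 : Set (Matrix (Fin n) (Fin n) ℝ)) : Set (Matrix (Fin n) (Fin n) ℝ) :=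
  {X | X.PosSemidef ∧ ∀ N ∈ 𝓜, (N * X).trace = 0}


/-! Peel rank-one terms off `X` by Schur-complement deflation. Deflating along `a` removes the
rank-one term `(Xa)(Xa)ᵀ / aᵀXa`, whose vector has nonnegative inner products with `a`, `b`, `c`,
and leaves `bᵀX'c = bᵀXc - (aᵀXb)(aᵀXc) / aᵀXa`; this stays nonnegative when
`(aᵀXb)(aᵀXc) ≤ (aᵀXa)(bᵀXc)`, and by Cauchy–Schwarz that inequality holds for `a` or, after a
cyclic permutation, for `b`. A second deflation along `b` leaves a matrix annihilating `a` and `b`,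
all of whose Gram vectors are orthogonal to `a` and `b`. So every `X` of the cone is a finite sum of
rank-one matrices of the cone, and such sums lie in the convex hull of a cone's rank-one members. -/

namespace Matrix

variable {ι : Type*} [Fintype ι]

lemma IsHermitian.dotProduct_mulVec_comm {X : Matrix ι ι ℝ} (hX : X.IsHermitian) (x y : ι → ℝ) :
    x ⬝ᵥ X *ᵥ y = y ⬝ᵥ X *ᵥ x := by
  rw [dotProduct_mulVec, ← mulVec_transpose, ← conjTranspose_eq_transpose_of_trivial, hX,
    dotProduct_comm]

lemma PosSemidef.dotProduct_mulVec_sq_le {X : Matrix ι ι ℝ} (hX : X.PosSemidef) (x y : ι → ℝ) :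
    (x ⬝ᵥ X *ᵥ y) ^ 2 ≤ (x ⬝ᵥ X *ᵥ x) * (y ⬝ᵥ X *ᵥ y) := by
  classical
  have h := (toBilin' X).apply_mul_apply_le_of_forall_zero_le
    (fun z ↦ by simpa [toBilin'_apply'] using hX.dotProduct_mulVec_nonneg z) x y
  simp only [toBilin'_apply'] at h
  rwa [hX.isHermitian.dotProduct_mulVec_comm y x, ← sq] at h

lemma PosSemidef.mulVec_eq_zero_of_dotProduct {X : Matrix ι ι ℝ} (hX : X.PosSemidef) {x : ι → ℝ}
    (hx : x ⬝ᵥ X *ᵥ x = 0) : X *ᵥ x = 0 :=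
  (hX.dotProduct_mulVec_zero_iff x).mp (by simpa using hx)

lemma dotProduct_vecMulVec_mulVec (u v x y : ι → ℝ) :
    x ⬝ᵥ vecMulVec u v *ᵥ y = (x ⬝ᵥ u) * (v ⬝ᵥ y) := by
  rw [vecMulVec_mulVec]
  simp [dotProduct_smul, mul_comm]

lemma PosSemidef.exists_eq_sum_vecMulVec_self {X : Matrix ι ι ℝ} (hX : X.PosSemidef) :
    ∃ w : ι → ι → ℝ, X = ∑ k, vecMulVec (w k) (w k) := by
  classical
  obtain ⟨B, rfl⟩ : ∃ B : Matrix ι ι ℝ, X = star B * B := by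
    open scoped MatrixOrder in exact CStarAlgebra.nonneg_iff_eq_star_mul_self.mp hX.nonneg
  refine ⟨B, ?_⟩
  ext i j
  simp [mul_apply, sum_apply, vecMulVec_apply]

lemma dotProduct_sum_vecMulVec_self_mulVec {κ : Type*} [Fintype κ] (w : κ → ι → ℝ) (x : ι → ℝ) :
    x ⬝ᵥ (∑ k, vecMulVec (w k) (w k)) *ᵥ x = ∑ k, (x ⬝ᵥ w k) ^ 2 := by
  simp only [sum_mulVec, dotProduct_sum, dotProduct_vecMulVec_mulVec, dotProduct_comm (w _) x, sq]

/-- The Schur complement of `X` along `v`. If `vᵀXv = 0` the inverse is `0` and this is `X`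
itself, which for positive semidefinite `X` is still right since then `Xv = 0`. -/
def deflate (X : Matrix ι ι ℝ) (v : ι → ℝ) : Matrix ι ι ℝ :=
  X - (v ⬝ᵥ X *ᵥ v)⁻¹ • vecMulVec (X *ᵥ v) (X *ᵥ v)

lemma smul_vecMulVec_add_deflate (X : Matrix ι ι ℝ) (v : ι → ℝ) :
    (v ⬝ᵥ X *ᵥ v)⁻¹ • vecMulVec (X *ᵥ v) (X *ᵥ v) + X.deflate v = X :=
  add_sub_cancel _ _

lemma IsHermitian.dotProduct_deflate_mulVec {X : Matrix ι ι ℝ} (hX : X.IsHermitian)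
    (v x y : ι → ℝ) :
    x ⬝ᵥ X.deflate v *ᵥ y =
      x ⬝ᵥ X *ᵥ y - (x ⬝ᵥ X *ᵥ v) * (v ⬝ᵥ X *ᵥ y) / (v ⬝ᵥ X *ᵥ v) := by
  rw [deflate, sub_mulVec, dotProduct_sub, smul_mulVec, dotProduct_smul,
    dotProduct_vecMulVec_mulVec, dotProduct_comm (X *ᵥ v), hX.dotProduct_mulVec_comm y,
    smul_eq_mul, inv_mul_eq_div]

lemma PosSemidef.deflate {X : Matrix ι ι ℝ} (hX : X.PosSemidef) (v : ι → ℝ) :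
    (X.deflate v).PosSemidef := by
  have hP : (vecMulVec (X *ᵥ v) (X *ᵥ v)).IsHermitian := by
    simpa using (posSemidef_vecMulVec_self_star (X *ᵥ v)).isHermitian
  refine .of_dotProduct_mulVec_nonneg (hX.isHermitian.sub (hP.smul (.all _))) fun x ↦ ?_
  rw [star_trivial, hX.isHermitian.dotProduct_deflate_mulVec,
    hX.isHermitian.dotProduct_mulVec_comm v x, sub_nonneg, ← sq]
  have hxx : 0 ≤ x ⬝ᵥ X *ᵥ x := by simpa using hX.dotProduct_mulVec_nonneg x
  have hvv : 0 ≤ v ⬝ᵥ X *ᵥ v := by simpa using hX.dotProduct_mulVec_nonneg v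
  exact div_le_of_le_mul₀ hvv hxx (hX.dotProduct_mulVec_sq_le x v)

lemma PosSemidef.deflate_mulVec_self {X : Matrix ι ι ℝ} (hX : X.PosSemidef) (v : ι → ℝ) :
    X.deflate v *ᵥ v = 0 := by
  refine (hX.deflate v).mulVec_eq_zero_of_dotProduct ?_
  rw [hX.isHermitian.dotProduct_deflate_mulVec, mul_self_div_self, sub_self]

lemma PosSemidef.deflate_mulVec_of_mulVec_eq_zero {X : Matrix ι ι ℝ} (hX : X.PosSemidef)
    (v : ι → ℝ) {z : ι → ℝ} (hz : X *ᵥ z = 0) : X.deflate v *ᵥ z = 0 := by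
  refine (hX.deflate v).mulVec_eq_zero_of_dotProduct ?_
  simp [hX.isHermitian.dotProduct_deflate_mulVec, hz]

end Matrix

lemma AddSubmonoid.closure_subset_convexHull {E : Type*} [AddCommGroup E] [Module ℝ E]
    {K : Set E} (h0 : 0 ∈ K) (hK : ∀ r : ℝ, 0 ≤ r → ∀ x ∈ K, r • x ∈ K) :
    (AddSubmonoid.closure K : Set E) ⊆ convexHull ℝ K := by
  have two_smul_mem {x : E} (hx : x ∈ convexHull ℝ K) : (2 : ℝ) • x ∈ convexHull ℝ K := by
    refine convexHull_mono ?_ (convexHull_smul (2 : ℝ) K ▸ Set.smul_mem_smul_set hx)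
    rintro _ ⟨y, hy, rfl⟩
    exact hK 2 zero_le_two y hy
  intro x hx
  induction hx using AddSubmonoid.closure_induction with
  | mem x hx => exact subset_convexHull ℝ K hx
  | zero => exact subset_convexHull ℝ K h0
  | add x y _ _ hx hy =>
    have h := convex_convexHull ℝ K (two_smul_mem hx) (two_smul_mem hy)
      (by norm_num : (0 : ℝ) ≤ 1 / 2) (by norm_num : (0 : ℝ) ≤ 1 / 2) (by norm_num)
    rwa [smul_smul, smul_smul, one_div_mul_cancel two_ne_zero, one_smul, one_smul] at h

lemma smul_mem_rankOneSet {n : ℕ} {r : ℝ} (hr : 0 ≤ r) {X : Matrix (Fin n) (Fin n) ℝ}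
    (hX : X ∈ RankOneSet n) : r • X ∈ RankOneSet n := by
  obtain ⟨x, rfl⟩ := hX
  refine ⟨√r • x, ?_⟩
  rw [smul_vecMulVec, vecMulVec_smul, smul_smul, Real.mul_self_sqrt hr]

lemma isROG_of_subset_closure {n : ℕ} (S : PointedCone ℝ (Matrix (Fin n) (Fin n) ℝ))
    (h : ↑S ⊆ (AddSubmonoid.closure (↑S ∩ RankOneSet n) : Set (Matrix (Fin n) (Fin n) ℝ))) :
    IsROG (S : Set (Matrix (Fin n) (Fin n) ℝ)) :=
  h.trans (AddSubmonoid.closure_subset_convexHull ⟨S.zero_mem, 0, by simp⟩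
    fun _ hr _ hX ↦ ⟨S.smul_mem hr hX.1, smul_mem_rankOneSet hr hX.2⟩) |>.antisymm
    (convexHull_min Set.inter_subset_left S.convex)

def pairwiseNonnegCone {n : ℕ} (a b c : Fin n → ℝ) : PointedCone ℝ (Matrix (Fin n) (Fin n) ℝ) where
  carrier := {X | X.PosSemidef ∧ 0 ≤ a ⬝ᵥ X *ᵥ b ∧ 0 ≤ b ⬝ᵥ X *ᵥ c ∧ 0 ≤ a ⬝ᵥ X *ᵥ c}
  add_mem' := fun ⟨hX, hab, hbc, hac⟩ ⟨hY, hab', hbc', hac'⟩ ↦ by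
    simp only [Set.mem_ofPred_eq, add_mulVec, dotProduct_add]
    exact ⟨hX.add hY, add_nonneg hab hab', add_nonneg hbc hbc', add_nonneg hac hac'⟩
  zero_mem' := by simp [PosSemidef.zero]
  smul_mem' := fun r X ⟨hX, hab, hbc, hac⟩ ↦ by
    simp only [Set.mem_ofPred_eq, smul_mulVec, dotProduct_smul]
    exact ⟨hX.smul r.2, smul_nonneg r.2 hab, smul_nonneg r.2 hbc, smul_nonneg r.2 hac⟩

lemma mem_pairwiseNonnegCone {n : ℕ} {a b c : Fin n → ℝ} {X : Matrix (Fin n) (Fin n) ℝ} :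
    X ∈ pairwiseNonnegCone a b c ↔
      X.PosSemidef ∧ 0 ≤ a ⬝ᵥ X *ᵥ b ∧ 0 ≤ b ⬝ᵥ X *ᵥ c ∧ 0 ≤ a ⬝ᵥ X *ᵥ c :=
  Iff.rfl

namespace pairwiseNonnegCone

variable {n : ℕ} {a b c : Fin n → ℝ}

lemma rotate : pairwiseNonnegCone b c a = pairwiseNonnegCone a b c := by
  ext X
  simp only [mem_pairwiseNonnegCone]
  constructor
  all_goals
    rintro ⟨hX, h₁, h₂, h₃⟩
    simp only [hX.isHermitian.dotProduct_mulVec_comm c a,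
      hX.isHermitian.dotProduct_mulVec_comm b a] at *
    tauto

lemma vecMulVec_self_mem {w : Fin n → ℝ} (hab : 0 ≤ (a ⬝ᵥ w) * (b ⬝ᵥ w))
    (hbc : 0 ≤ (b ⬝ᵥ w) * (c ⬝ᵥ w)) (hac : 0 ≤ (a ⬝ᵥ w) * (c ⬝ᵥ w)) :
    vecMulVec w w ∈ pairwiseNonnegCone a b c := by
  simp only [mem_pairwiseNonnegCone, dotProduct_vecMulVec_mulVec, dotProduct_comm w]
  exact ⟨by simpa using posSemidef_vecMulVec_self_star w, hab, hbc, hac⟩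

lemma smul_vecMulVec_add_mem_closure {r : ℝ} (hr : 0 ≤ r) {w : Fin n → ℝ}
    (hab : 0 ≤ (a ⬝ᵥ w) * (b ⬝ᵥ w)) (hbc : 0 ≤ (b ⬝ᵥ w) * (c ⬝ᵥ w))
    (hac : 0 ≤ (a ⬝ᵥ w) * (c ⬝ᵥ w)) {D : Matrix (Fin n) (Fin n) ℝ}
    (hD : D ∈ AddSubmonoid.closure (↑(pairwiseNonnegCone a b c) ∩ RankOneSet n)) :
    r • vecMulVec w w + D ∈ AddSubmonoid.closure (↑(pairwiseNonnegCone a b c) ∩ RankOneSet n) :=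
  add_mem (AddSubmonoid.subset_closure
    ⟨(pairwiseNonnegCone a b c).smul_mem hr (vecMulVec_self_mem hab hbc hac),
      smul_mem_rankOneSet hr ⟨w, rfl⟩⟩) hD

lemma mem_closure_of_mulVec_eq_zero {X : Matrix (Fin n) (Fin n) ℝ} (hX : X.PosSemidef)
    (ha : X *ᵥ a = 0) (hb : X *ᵥ b = 0) :
    X ∈ AddSubmonoid.closure (↑(pairwiseNonnegCone a b c) ∩ RankOneSet n) := by
  obtain ⟨w, rfl⟩ := hX.exists_eq_sum_vecMulVec_self
  have orthogonal {x : Fin n → ℝ} (hx : (∑ k, vecMulVec (w k) (w k)) *ᵥ x = 0) (k : Fin n) :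
      x ⬝ᵥ w k = 0 := by
    have h := dotProduct_sum_vecMulVec_self_mulVec w x
    rw [hx, dotProduct_zero, eq_comm, Finset.sum_eq_zero_iff_of_nonneg fun _ _ ↦ sq_nonneg _] at h
    exact pow_eq_zero_iff two_ne_zero |>.mp (h k (Finset.mem_univ k))
  refine AddSubmonoid.sum_mem _ fun k _ ↦ AddSubmonoid.subset_closure
    ⟨vecMulVec_self_mem ?_ ?_ ?_, w k, rfl⟩ <;>
  simp [orthogonal ha k, orthogonal hb k]

lemma mem_closure_of_mulVec_eq_zero_of_nonneg {X : Matrix (Fin n) (Fin n) ℝ}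
    (hX : X.PosSemidef) (ha : X *ᵥ a = 0) (hbc : 0 ≤ b ⬝ᵥ X *ᵥ c) :
    X ∈ AddSubmonoid.closure (↑(pairwiseNonnegCone a b c) ∩ RankOneSet n) := by
  have hab : a ⬝ᵥ X *ᵥ b = 0 := by rw [hX.isHermitian.dotProduct_mulVec_comm, ha, dotProduct_zero]
  have hbb : 0 ≤ b ⬝ᵥ X *ᵥ b := by simpa using hX.dotProduct_mulVec_nonneg b
  rw [← smul_vecMulVec_add_deflate X b]
  refine smul_vecMulVec_add_mem_closure (inv_nonneg.2 hbb) ?_ ?_ ?_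
    (mem_closure_of_mulVec_eq_zero (hX.deflate b)
      (hX.deflate_mulVec_of_mulVec_eq_zero b ha) (hX.deflate_mulVec_self b))
  · simp [hab]
  · rw [hX.isHermitian.dotProduct_mulVec_comm c b]
    exact mul_nonneg hbb hbc
  · simp [hab]

lemma mem_closure_of_mul_le {X : Matrix (Fin n) (Fin n) ℝ} (hX : X ∈ pairwiseNonnegCone a b c)
    (h : (a ⬝ᵥ X *ᵥ b) * (a ⬝ᵥ X *ᵥ c) ≤ (a ⬝ᵥ X *ᵥ a) * (b ⬝ᵥ X *ᵥ c)) :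
    X ∈ AddSubmonoid.closure (↑(pairwiseNonnegCone a b c) ∩ RankOneSet n) := by
  obtain ⟨hX, hab, hbc, hac⟩ := hX
  have haa : 0 ≤ a ⬝ᵥ X *ᵥ a := by simpa using hX.dotProduct_mulVec_nonneg a
  have hbc' : 0 ≤ b ⬝ᵥ X.deflate a *ᵥ c := by
    rw [hX.isHermitian.dotProduct_deflate_mulVec, sub_nonneg,
      hX.isHermitian.dotProduct_mulVec_comm b a]
    exact div_le_of_le_mul₀ haa hbc (by linarith)
  rw [← smul_vecMulVec_add_deflate X a]
  refine smul_vecMulVec_add_mem_closure (inv_nonneg.2 haa) ?_ ?_ ?_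
    (mem_closure_of_mulVec_eq_zero_of_nonneg (hX.deflate a) (hX.deflate_mulVec_self a) hbc')
  all_goals simp only [hX.isHermitian.dotProduct_mulVec_comm b a,
    hX.isHermitian.dotProduct_mulVec_comm c a]
  exacts [mul_nonneg haa hab, mul_nonneg hab hac, mul_nonneg haa hac]

lemma subset_closure :
    ↑(pairwiseNonnegCone a b c) ⊆
      (AddSubmonoid.closure (↑(pairwiseNonnegCone a b c) ∩ RankOneSet n) :
        Set (Matrix (Fin n) (Fin n) ℝ)) := by
  intro X hXmem
  obtain ⟨hX, hab, hbc, hac⟩ := id hXmem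
  rcases le_or_gt ((a ⬝ᵥ X *ᵥ b) * (a ⬝ᵥ X *ᵥ c)) ((a ⬝ᵥ X *ᵥ a) * (b ⬝ᵥ X *ᵥ c)) with h | h
  · exact mem_closure_of_mul_le hXmem h
  · rw [← rotate]
    refine mem_closure_of_mul_le (by rwa [rotate]) ?_
    simp only [hX.isHermitian.dotProduct_mulVec_comm b a, hX.isHermitian.dotProduct_mulVec_comm c a]
    have haa : 0 ≤ a ⬝ᵥ X *ᵥ a := by simpa using hX.dotProduct_mulVec_nonneg a
    have hbb : 0 ≤ b ⬝ᵥ X *ᵥ b := by simpa using hX.dotProduct_mulVec_nonneg b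
    by_contra! h'
    -- multiplying the two failed pivot conditions contradicts Cauchy–Schwarz for `a` and `b`
    nlinarith [mul_lt_mul'' h h' (mul_nonneg haa hbc) (mul_nonneg hbb hac),
      mul_le_mul_of_nonneg_right (hX.dotProduct_mulVec_sq_le a b) (mul_nonneg hbc hac)]

end pairwiseNonnegCone

theorem stmt_14 {n : ℕ} (a b c : Fin n → ℝ) :
    IsROG {X : Matrix (Fin n) (Fin n) ℝ | X.PosSemidef ∧
      0 ≤ a ⬝ᵥ X.mulVec b ∧ 0 ≤ b ⬝ᵥ X.mulVec c ∧ 0 ≤ a ⬝ᵥ X.mulVec c} :=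
  isROG_of_subset_closure _ pairwiseNonnegCone.subset_closure
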